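/- (Absence of resonant triads for deep-water gravity waves.) Let g > 0 and define the dispersion relation ω(k) = √(g‖k‖) for k ∈ ℝ². If k₁, k₂, k₃ ∈ ℝ² are all nonzero and k₁ + k₂ + k₃ = 0, then none of the four combinations ω(k₁)+ω(k₂)+ω(k₃), ω(k₁)+ω(k₂)−ω(k₃), ω(k₁)−ω(k₂)+ω(k₃), ω(k₁)−ω(k₂)−ω(k₃) is equal to zero. -/
import Mathlib


/-- Euclidean norm on ℝ². -/
noncomputable def norm2 (k : ℝ × ℝ) : ℝ := Real.sqrt (k.1 ^ 2 + k.2 ^ 2)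

/-- Deep-water dispersion relation ω(k) = √(g‖k‖). -/
noncomputable def omg (g : ℝ) (k : ℝ × ℝ) : ℝ := Real.sqrt (g * norm2 k)

lemma norm2_nonneg (k : ℝ × ℝ) : 0 ≤ norm2 k := Real.sqrt_nonneg _

lemma norm2_pos (k : ℝ × ℝ) (hk : k ≠ 0) : 0 < norm2 k := by
  apply Real.sqrt_pos.2
  rcases (not_and_or.1 (fun h : k.1 = 0 ∧ k.2 = 0 => hk (Prod.ext h.1 h.2))) with h | h <;>
    positivity

lemma norm2_triangle (a b : ℝ × ℝ) : norm2 (a + b) ≤ norm2 a + norm2 b := by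
  have hA : (norm2 a) ^ 2 = a.1 ^ 2 + a.2 ^ 2 := Real.sq_sqrt (by positivity)
  have hB : (norm2 b) ^ 2 = b.1 ^ 2 + b.2 ^ 2 := Real.sq_sqrt (by positivity)
  have hd : a.1 * b.1 + a.2 * b.2 ≤ norm2 a * norm2 b := by
    have h1 : a.1 * b.1 + a.2 * b.2 ≤ Real.sqrt ((a.1 * b.1 + a.2 * b.2) ^ 2) := by
      rw [Real.sqrt_sq_eq_abs]; exact le_abs_self _
    have h2 : Real.sqrt ((a.1 * b.1 + a.2 * b.2) ^ 2)
        ≤ Real.sqrt ((a.1 ^ 2 + a.2 ^ 2) * (b.1 ^ 2 + b.2 ^ 2)) := by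
      apply Real.sqrt_le_sqrt; nlinarith [sq_nonneg (a.1 * b.2 - a.2 * b.1)]
    calc a.1 * b.1 + a.2 * b.2 ≤ _ := h1
      _ ≤ _ := h2
      _ = norm2 a * norm2 b := by rw [norm2, norm2, ← Real.sqrt_mul (by positivity)]
  rw [norm2]
  rw [Real.sqrt_le_iff]
  refine ⟨add_nonneg (norm2_nonneg a) (norm2_nonneg b), ?_⟩
  show (a.1 + b.1) ^ 2 + (a.2 + b.2) ^ 2 ≤ _
  nlinarith [norm2_nonneg a, norm2_nonneg b]

lemma norm2_neg (k : ℝ × ℝ) : norm2 (-k) = norm2 k := by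
  simp [norm2, neg_sq]

lemma key (g : ℝ) (hg : 0 < g) (a b c : ℝ × ℝ) (ha : a ≠ 0) (hb : b ≠ 0)
    (h : a + b + c = 0) : omg g c < omg g a + omg g b := by
  have hc : c = -(a + b) := by
    have := h; linear_combination (norm := module) this
  have hA : 0 < norm2 a := norm2_pos a ha
  have hB : 0 < norm2 b := norm2_pos b hb
  have hwa : 0 < omg g a := Real.sqrt_pos.2 (by positivity)
  have hwb : 0 < omg g b := Real.sqrt_pos.2 (by positivity)
  have hwa2 : (omg g a) ^ 2 = g * norm2 a := Real.sq_sqrt (by positivity)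
  have hwb2 : (omg g b) ^ 2 = g * norm2 b := Real.sq_sqrt (by positivity)
  have hnc : norm2 c ≤ norm2 a + norm2 b := by
    rw [hc, norm2_neg]; exact norm2_triangle a b
  rw [omg, Real.sqrt_lt' (by linarith)]
  nlinarith [mul_pos hwa hwb]

/-- Absence of resonant triads for deep-water gravity waves. -/
theorem no_resonant_triads (g : ℝ) (hg : 0 < g) (k₁ k₂ k₃ : ℝ × ℝ)
    (h₁ : k₁ ≠ 0) (h₂ : k₂ ≠ 0) (h₃ : k₃ ≠ 0) (hsum : k₁ + k₂ + k₃ = 0) :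
    omg g k₁ + omg g k₂ + omg g k₃ ≠ 0 ∧
    omg g k₁ + omg g k₂ - omg g k₃ ≠ 0 ∧
    omg g k₁ - omg g k₂ + omg g k₃ ≠ 0 ∧
    omg g k₁ - omg g k₂ - omg g k₃ ≠ 0 := by
  have hw₁ : 0 < omg g k₁ := Real.sqrt_pos.2 (mul_pos hg (norm2_pos _ h₁))
  have hw₂ : 0 < omg g k₂ := Real.sqrt_pos.2 (mul_pos hg (norm2_pos _ h₂))
  have hw₃ : 0 < omg g k₃ := Real.sqrt_pos.2 (mul_pos hg (norm2_pos _ h₃))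
  have ha : omg g k₃ < omg g k₁ + omg g k₂ := key g hg k₁ k₂ k₃ h₁ h₂ hsum
  have hb : omg g k₂ < omg g k₁ + omg g k₃ := key g hg k₁ k₃ k₂ h₁ h₃ (by
    linear_combination (norm := module) hsum)
  have hc : omg g k₁ < omg g k₂ + omg g k₃ := key g hg k₂ k₃ k₁ h₂ h₃ (by
    linear_combination (norm := module) hsum)
  refine ⟨by linarith, by linarith, by linarith, by linarith⟩
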